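/- Consider transmission of a codeword from a code C ⊆ F_2^N over a binary additive noise channel, where the received word is Y = X + Z with X ∈ C the transmitted codeword and Z ∈ F_2^N the noise, independent of X, with known noise distribution P_Z. Suppose the decoder enumerates all noise sequences z_1, z_2, … ∈ F_2^N in non-increasing order of probability, P_Z(z_1) ≥ P_Z(z_2) ≥ …, and outputs X̂ = Y − z_i for the smallest index i such that Y − z_i ∈ C. Then X̂ is a maximum-likelihood codeword: for every c ∈ C, P_Z(Y − X̂) ≥ P_Z(Y − c). -/
import Mathlib


/-- GRAND is a maximum-likelihood decoder. If the decoder queries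
putative noise sequences `z 0, z 1, …`, an enumeration of all of `F_2^N` in
non-increasing order of probability under the noise distribution `P`, and
outputs `X̂ = Y - z i` for the smallest index `i` with `Y - z i ∈ C`, then
`X̂` maximizes the likelihood: `P (Y - X̂) ≥ P (Y - c)` for every `c ∈ C`. -/
theorem grand_is_ML (N : ℕ) (C : Set (Fin N → ZMod 2))
    (P : PMF (Fin N → ZMod 2))
    (z : ℕ → (Fin N → ZMod 2)) (hz : Function.Surjective z)
    (hmono : ∀ i j : ℕ, i ≤ j → P (z j) ≤ P (z i))
    (X : Fin N → ZMod 2) (hX : X ∈ C)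
    (Z : Fin N → ZMod 2)
    (Y : Fin N → ZMod 2) (hY : Y = X + Z)
    (i : ℕ) (hi : Y - z i ∈ C) (hfirst : ∀ j : ℕ, j < i → Y - z j ∉ C)
    (Xhat : Fin N → ZMod 2) (hXhat : Xhat = Y - z i) :
    ∀ c ∈ C, P (Y - c) ≤ P (Y - Xhat) := by
  intro c hc
  obtain ⟨j, hj⟩ := hz (Y - c)
  have hji : i ≤ j := by
    by_contra h
    exact hfirst j (by omega) (by rw [hj]; simpa using hc)
  have : Y - Xhat = z i := by rw [hXhat]; abel
  rw [this, ← hj]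
  exact hmono i j hji
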